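/- Let H be a real Hilbert space, a : H × H → ℝ a bilinear, bounded, coercive form, L : H → ℝ a bounded linear functional, and j : H → ℝ ∪ {+∞} a convex, proper, lower semicontinuous functional. Then there exists a unique u ∈ H such that a(u, v − u) + j(v) − j(u) ≥ L(v − u) for all v ∈ H. -/

import Mathlib

set_option maxHeartbeats 1000000
local notation "⟪" x ", " y "⟫_ℝ" => @inner ℝ _ _ x y
open Filter

private lemma prox_exists {H : Type*} [NormedAddCommGroup H] [InnerProductSpace ℝ H]
    [CompleteSpace H]
    (j : H → EReal)
    (hconv : ∀ u v : H, ∀ t : ℝ, 0 ≤ t → t ≤ 1 →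
      j (t • u + (1 - t) • v) ≤ ((t : ℝ) : EReal) * j u + (((1 - t : ℝ)) : EReal) * j v)
    (hlsc : LowerSemicontinuous j)
    (hnobot : ∀ u, j u ≠ ⊥)
    (x0 : H) (hx0 : j x0 ≠ ⊤)
    (c : ℝ) (hc : 0 < c) (b : H) :
    ∃ w : H, j w ≠ ⊤ ∧ ∀ v : H, j v ≠ ⊤ →
      0 ≤ 2*c*⟪w, v - w⟫_ℝ + ⟪b, v - w⟫_ℝ + (j v).toReal - (j w).toReal := by
  classical
  set jr : H → ℝ := fun v => (j v).toReal with hjr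
  have hcoe : ∀ x : H, j x ≠ ⊤ → j x = ((jr x : ℝ) : EReal) := fun x hx =>
    (EReal.coe_toReal hx (hnobot x)).symm
  have hcomb : ∀ (u v : H), j u ≠ ⊤ → j v ≠ ⊤ → ∀ t : ℝ, 0 ≤ t → t ≤ 1 →
      j (t • u + (1 - t) • v) ≠ ⊤ ∧ jr (t • u + (1 - t) • v) ≤ t * jr u + (1 - t) * jr v := by
    intro u v hu hv t ht0 ht1
    have h := hconv u v t ht0 ht1
    rw [hcoe u hu, hcoe v hv, ← EReal.coe_mul, ← EReal.coe_mul, ← EReal.coe_add] at h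
    have hne : j (t • u + (1 - t) • v) ≠ ⊤ :=
      fun htop => by rw [htop] at h; exact (EReal.coe_ne_top _) (top_le_iff.mp h)
    rw [hcoe _ hne, EReal.coe_le_coe_iff] at h
    exact ⟨hne, h⟩
  set k : ℝ := jr x0 with hk
  obtain ⟨r, hr, hball⟩ : ∃ r > 0, ∀ y : H, ‖y - x0‖ < r → ((k - 1 : ℝ) : EReal) < j y := by
    have hlt : ((k - 1 : ℝ) : EReal) < j x0 := by
      rw [hcoe x0 hx0, EReal.coe_lt_coe_iff]; linarith
    have := hlsc x0 _ hlt
    rw [Metric.eventually_nhds_iff] at this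
    obtain ⟨ε, hε, hh⟩ := this
    exact ⟨ε, hε, fun y hy => hh (by simpa [dist_eq_norm] using hy)⟩
  have hlb : ∀ x : H, j x ≠ ⊤ → k - 1 - (2/r) * ‖x - x0‖ ≤ jr x := by
    intro x hx
    rcases lt_or_ge ‖x - x0‖ r with h | h
    · have h1 : k - 1 < jr x := by
        have := hball x h
        rw [hcoe x hx, EReal.coe_lt_coe_iff] at this; exact this
      have h2 : 0 ≤ (2/r) * ‖x - x0‖ := by positivity
      linarith
    · have hxn : (0:ℝ) < ‖x - x0‖ := lt_of_lt_of_le hr h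
      set t : ℝ := r / (2 * ‖x - x0‖) with htdef
      have ht0 : 0 < t := by positivity
      have ht1 : t ≤ 1 := by
        rw [htdef, div_le_one (by positivity)]; linarith
      set y := t • x + (1 - t) • x0 with hy
      have hyx0 : y - x0 = t • (x - x0) := by
        rw [hy, sub_smul, one_smul, smul_sub]; abel
      have hyn : ‖y - x0‖ < r := by
        rw [hyx0, norm_smul, Real.norm_eq_abs, abs_of_pos ht0, htdef, div_mul_eq_mul_div,
          div_lt_iff₀ (by positivity)]
        nlinarith
      have h1 := hball y hyn
      have h2 := (hcomb x x0 hx hx0 t ht0.le ht1).2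
      have h1' : k - 1 < jr y := by
        rw [hcoe y (hcomb x x0 hx hx0 t ht0.le ht1).1, EReal.coe_lt_coe_iff] at h1
        exact h1
      have h3 : k - 1 < t * jr x + (1 - t) * k := lt_of_lt_of_le h1' h2
      have h4 : k - 1/t < jr x := by
        have hlt : t * (k - 1/t) < t * jr x := by
          have he : t * (k - 1/t) = t*k - 1 := by field_simp
          rw [he]; nlinarith
        exact lt_of_mul_lt_mul_left hlt ht0.le
      have h5 : 1/t = 2 * ‖x - x0‖ / r := by rw [htdef]; field_simp
      rw [h5] at h4
      have h6 : 2 * ‖x - x0‖ / r = (2/r) * ‖x - x0‖ := by ring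
      rw [h6] at h4
      linarith
  set q : H → ℝ := fun v => c * ‖v‖^2 + ⟪b, v⟫_ℝ with hq
  set φ : H → ℝ := fun v => q v + jr v with hφ
  set D : Set H := {x | j x ≠ ⊤} with hD
  have hx0D : x0 ∈ D := hx0
  set β : ℝ := ‖b‖ + 2/r with hβ
  set B : ℝ := (k - 1 - (2/r) * ‖x0‖) - β^2/(4*c) with hB
  have hφlb : ∀ v ∈ D, B ≤ φ v := by
    intro v hv
    have h1 := hlb v hv
    have h2 : -(‖b‖ * ‖v‖) ≤ ⟪b, v⟫_ℝ := neg_le_of_abs_le (abs_real_inner_le_norm b v)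
    have h3 : ‖v - x0‖ ≤ ‖v‖ + ‖x0‖ := norm_sub_le v x0
    have h4 : 0 ≤ (2/r) := by positivity
    have h5 : (2/r) * ‖v - x0‖ ≤ (2/r) * (‖v‖ + ‖x0‖) := by nlinarith
    have key : 0 ≤ c * ‖v‖^2 - β * ‖v‖ + β^2/(4*c) := by
      have he : c * ‖v‖^2 - β * ‖v‖ + β^2/(4*c) = c * (‖v‖ - β/(2*c))^2 := by
        field_simp; ring
      rw [he]
      positivity
    simp only [hφ, hq, hB, hβ] at *
    nlinarith
  have hSne : (φ '' D).Nonempty := ⟨φ x0, ⟨x0, hx0D, rfl⟩⟩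
  have hSbdd : BddBelow (φ '' D) := ⟨B, by rintro y ⟨v, hv, rfl⟩; exact hφlb v hv⟩
  set m : ℝ := sInf (φ '' D) with hm
  have hmle : ∀ v ∈ D, m ≤ φ v := fun v hv => csInf_le hSbdd ⟨v, hv, rfl⟩
  have hseq : ∀ n : ℕ, ∃ x, x ∈ D ∧ φ x < m + 1/(n+1) := by
    intro n
    obtain ⟨y, ⟨x, hx, rfl⟩, hy⟩ := Real.lt_sInf_add_pos hSne
      (ε := 1/(n+1)) (by positivity)
    exact ⟨x, hx, hy⟩
  choose u huD huφ using hseq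
  have hmid : ∀ p p' : H, p ∈ D → p' ∈ D →
      m + (c/4) * ‖p - p'‖^2 ≤ (φ p + φ p')/2 := by
    intro p p' hp hp'
    have hcm := hcomb p p' hp hp' (1/2) (by norm_num) (by norm_num)
    set w := (1/2 : ℝ) • p + (1 - 1/2 : ℝ) • p' with hw
    have hwd : w ∈ D := hcm.1
    have h1 : m ≤ φ w := hmle w hwd
    have hw2 : w = (1/2 : ℝ) • (p + p') := by
      rw [hw, smul_add]; norm_num
    have hnw : ‖w‖^2 = (1/4) * ‖p + p'‖^2 := by
      rw [hw2, norm_smul, Real.norm_eq_abs, abs_of_pos (by norm_num : (0:ℝ) < 1/2), mul_pow]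
      ring
    have hpar : ‖p + p'‖^2 + ‖p - p'‖^2 = 2*‖p‖^2 + 2*‖p'‖^2 := by
      have hpl := parallelogram_law_with_norm ℝ p p'
      nlinarith [hpl]
    have hib : ⟪b, w⟫_ℝ = (1/2) * ⟪b, p⟫_ℝ + (1/2) * ⟪b, p'⟫_ℝ := by
      rw [hw2, real_inner_smul_right, inner_add_right]; ring
    have hjw : jr w ≤ (1/2) * jr p + (1 - 1/2) * jr p' := hcm.2
    have e1 : c * ((1/4) * ‖p + p'‖^2) = (c*‖p‖^2)/2 + (c*‖p'‖^2)/2 - (c/4)*‖p - p'‖^2 := by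
      have e0 : ‖p + p'‖^2 = 2*‖p‖^2 + 2*‖p'‖^2 - ‖p - p'‖^2 := by linarith [hpar]
      rw [e0]; ring
    simp only [hφ, hq] at h1 ⊢
    rw [hnw, hib, e1] at h1
    linarith
  have hcauchy : CauchySeq u := by
    refine cauchySeq_of_le_tendsto_0 (fun N => Real.sqrt ((4/c) * (1/(N+1)))) ?_ ?_
    · intro n p N hn hp
      have h1 := hmid (u n) (u p) (huD n) (huD p)
      have h2 := huφ n
      have h3 := huφ p
      have hεn : 1/((n:ℝ)+1) ≤ 1/((N:ℝ)+1) := by gcongr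
      have hεp : 1/((p:ℝ)+1) ≤ 1/((N:ℝ)+1) := by gcongr
      have k1 : c/4 * ‖u n - u p‖^2 ≤ 1/((N:ℝ)+1) := by linarith
      have key : ‖u n - u p‖^2 ≤ (4/c) * (1/((N:ℝ)+1)) := by
        rw [show (4/c) * (1/((N:ℝ)+1)) = (4 * (1/((N:ℝ)+1)))/c from by ring,
          le_div_iff₀ hc]
        linarith
      rw [dist_eq_norm]
      calc ‖u n - u p‖ = Real.sqrt (‖u n - u p‖^2) := (Real.sqrt_sq (norm_nonneg _)).symm
        _ ≤ Real.sqrt ((4/c) * (1/(N+1))) := Real.sqrt_le_sqrt key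
    · have h0 : Tendsto (fun N : ℕ => (4/c) * (1/((N:ℝ)+1))) atTop (nhds 0) := by
        have := tendsto_one_div_add_atTop_nhds_zero_nat.const_mul (4/c)
        simpa using this
      have := (Real.continuous_sqrt.tendsto 0).comp h0
      simpa [Function.comp_def] using this
  obtain ⟨w, hw⟩ := cauchySeq_tendsto_of_complete hcauchy
  have hqc : Continuous q := by
    apply Continuous.add
    · exact continuous_const.mul ((continuous_norm).pow 2)
    · exact continuous_const.inner continuous_id
  have hqt : Tendsto (fun n => q (u n)) atTop (nhds (q w)) := (hqc.tendsto w).comp hw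
  have hjw : j w ≤ ((m - q w : ℝ) : EReal) := by
    by_contra hcon
    push_neg at hcon
    obtain ⟨y, hy1, hy2⟩ := exists_between hcon
    have hyt : y ≠ ⊤ := fun h => by
      rw [h] at hy2; exact (lt_irrefl _ (lt_of_lt_of_le hy2 le_top)).elim
    have hyb : y ≠ ⊥ := fun h => by rw [h] at hy1; exact (not_lt_bot hy1).elim
    set yr := y.toReal with hyr
    have hyy : y = ((yr : ℝ) : EReal) := (EReal.coe_toReal hyt hyb).symm
    have hev : ∀ᶠ n in atTop, y < j (u n) := hw.eventually (hlsc w y hy2)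
    have hev2 : ∀ᶠ n : ℕ in atTop, q (u n) ≤ m + 1/((n:ℝ)+1) - yr := by
      filter_upwards [hev] with n hn
      have hyrlt : yr < jr (u n) := by
        rw [hyy, hcoe (u n) (huD n), EReal.coe_lt_coe_iff] at hn; exact hn
      have h2 := huφ n
      simp only [hφ] at h2
      push_cast at h2 ⊢
      linarith
    have hlim : Tendsto (fun n : ℕ => m + 1/((n:ℝ)+1) - yr) atTop (nhds (m - yr)) := by
      have h1 := tendsto_one_div_add_atTop_nhds_zero_nat.const_add m
      have h2 := h1.sub_const yr
      simpa using h2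
    have hle : q w ≤ m - yr := le_of_tendsto_of_tendsto hqt hlim hev2
    have hylt : m - q w < yr := by
      rw [hyy, EReal.coe_lt_coe_iff] at hy1; exact hy1
    linarith
  have hwD : j w ≠ ⊤ := fun h => by
    rw [h] at hjw; exact (EReal.coe_ne_top _) (top_le_iff.mp hjw)
  have hjwr : jr w ≤ m - q w := by
    rw [hcoe w hwD, EReal.coe_le_coe_iff] at hjw; exact hjw
  have hφw : φ w ≤ m := by simp only [hφ]; linarith
  refine ⟨w, hwD, ?_⟩
  intro v hv
  set A0 : ℝ := 2*c*⟪w, v - w⟫_ℝ + ⟪b, v - w⟫_ℝ + jr v - jr w with hA0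
  set B0 : ℝ := c * ‖v - w‖^2 with hB0
  have hstep : ∀ t : ℝ, 0 < t → t ≤ 1 → 0 ≤ A0 + t * B0 := by
    intro t ht0 ht1
    have hcm := hcomb v w hv hwD t ht0.le ht1
    set wt := t • v + (1 - t) • w with hwt
    have hwt2 : wt = w + t • (v - w) := by
      rw [hwt, smul_sub, sub_smul, one_smul]; abel
    have h1 : φ w ≤ φ wt := le_trans hφw (hmle wt hcm.1)
    have hn : ‖wt‖^2 = ‖w‖^2 + 2*(t*⟪w, v - w⟫_ℝ) + t^2*‖v - w‖^2 := by
      rw [hwt2, norm_add_sq_real, real_inner_smul_right, norm_smul, Real.norm_eq_abs,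
        abs_of_pos ht0]
      ring
    have hbwt : ⟪b, wt⟫_ℝ = ⟪b, w⟫_ℝ + t * ⟪b, v - w⟫_ℝ := by
      rw [hwt2, inner_add_right, real_inner_smul_right]
    have hjwt : jr wt ≤ t * jr v + (1 - t) * jr w := hcm.2
    simp only [hφ, hq] at h1
    rw [hn, hbwt] at h1
    have h2 : 0 ≤ t * (A0 + t * B0) := by simp only [hA0, hB0]; nlinarith
    by_contra hcon
    push_neg at hcon
    nlinarith
  have hlim2 : Tendsto (fun n : ℕ => A0 + (1/((n:ℝ)+1)) * B0) atTop (nhds A0) := by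
    have h1 := tendsto_one_div_add_atTop_nhds_zero_nat.mul_const B0
    have h2 := h1.const_add A0
    simpa using h2
  have hfin : 0 ≤ A0 := ge_of_tendsto' hlim2 (fun n => hstep _ (by positivity)
    (by rw [div_le_one (by positivity)]; linarith [Nat.cast_nonneg (α := ℝ) n]))
  exact hfin

/-- Existence and uniqueness for the elliptic variational inequality of the
second kind: `a` bilinear, bounded and coercive on a real Hilbert space,
`L` a bounded linear functional, `j : H → ℝ ∪ {+∞}` (modelled as `EReal`-valued,
never `⊥`) convex, proper and lower semicontinuous.  The inequality
`a(u, v−u) + j(v) − j(u) ≥ L(v−u)` is stated in the equivalent form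
`a(u, v−u) + j(v) ≥ L(v−u) + j(u)` to avoid `∞ − ∞`. -/
theorem stmt_2 {H : Type*} [NormedAddCommGroup H] [InnerProductSpace ℝ H]
    [CompleteSpace H]
    (a : H →ₗ[ℝ] H →ₗ[ℝ] ℝ) (M α : ℝ) (hM : 0 < M) (hα : 0 < α)
    (hbound : ∀ u v : H, |a u v| ≤ M * ‖u‖ * ‖v‖)
    (hcoer : ∀ v : H, a v v ≥ α * ‖v‖ ^ 2)
    (L : H →L[ℝ] ℝ)
    (j : H → EReal)
    (hconv : ∀ u v : H, ∀ t : ℝ, 0 ≤ t → t ≤ 1 →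
      j (t • u + (1 - t) • v) ≤ ((t : ℝ) : EReal) * j u + (((1 - t : ℝ)) : EReal) * j v)
    (hlsc : LowerSemicontinuous j)
    (hproper : ∃ u, j u ≠ ⊤) (hnobot : ∀ u, j u ≠ ⊥) :
    ∃! u : H, ∀ v : H,
      ((a u (v - u) : ℝ) : EReal) + j v ≥ ((L (v - u) : ℝ) : EReal) + j u := by
  classical
  obtain ⟨x0, hx0⟩ := hproper
  set jr : H → ℝ := fun v => (j v).toReal with hjr
  have hcoe : ∀ x : H, j x ≠ ⊤ → j x = ((jr x : ℝ) : EReal) := fun x hx =>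
    (EReal.coe_toReal hx (hnobot x)).symm
  -- Riesz representations
  set Amap : H → H := fun u => (InnerProductSpace.toDual ℝ H).symm
    (LinearMap.mkContinuous (a u) (M * ‖u‖) (fun v => by
      rw [Real.norm_eq_abs]
      calc |a u v| ≤ M * ‖u‖ * ‖v‖ := hbound u v
        _ = (M * ‖u‖) * ‖v‖ := by ring)) with hAmap
  have hA : ∀ u v : H, ⟪Amap u, v⟫_ℝ = a u v := fun u v =>
    InnerProductSpace.toDual_symm_apply
  set l : H := (InnerProductSpace.toDual ℝ H).symm L with hl
  have hL : ∀ v : H, ⟪l, v⟫_ℝ = L v := fun v => InnerProductSpace.toDual_symm_apply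
  set ρ : ℝ := α / M^2 with hρdef
  have hρ : 0 < ρ := by positivity
  set z : H → H := fun u => u - ρ • (Amap u - l) with hz
  set K : ℝ := 1 - α^2/M^2 with hK
  clear_value z K
  -- difference bounds for A
  have hAd : ∀ u₁ u₂ v : H, ⟪Amap u₁ - Amap u₂, v⟫_ℝ = a (u₁ - u₂) v := by
    intro u₁ u₂ v
    rw [inner_sub_left, hA, hA, map_sub, LinearMap.sub_apply]
  have hAnorm : ∀ u₁ u₂ : H, ‖Amap u₁ - Amap u₂‖ ≤ M * ‖u₁ - u₂‖ := by
    intro u₁ u₂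
    rcases eq_or_lt_of_le (norm_nonneg (Amap u₁ - Amap u₂)) with h | h
    · rw [← h]; positivity
    · have h1 : ‖Amap u₁ - Amap u₂‖^2 = a (u₁ - u₂) (Amap u₁ - Amap u₂) := by
        rw [← hAd, real_inner_self_eq_norm_sq]
      have h2 : a (u₁ - u₂) (Amap u₁ - Amap u₂) ≤ M * ‖u₁ - u₂‖ * ‖Amap u₁ - Amap u₂‖ :=
        le_trans (le_abs_self _) (hbound _ _)
      nlinarith
  -- z is Lipschitz with constant √K
  have hzlip : ∀ u₁ u₂ : H, ‖z u₁ - z u₂‖^2 ≤ K * ‖u₁ - u₂‖^2 := by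
    intro u₁ u₂
    have hdz : z u₁ - z u₂ = (u₁ - u₂) - ρ • (Amap u₁ - Amap u₂) := by
      rw [hz]
      simp only [smul_sub]
      abel
    set d := u₁ - u₂ with hd
    set e := Amap u₁ - Amap u₂ with he
    have hde : ⟪d, e⟫_ℝ = a d d := by rw [real_inner_comm, hAd]
    have hcd : α * ‖d‖^2 ≤ ⟪d, e⟫_ℝ := by rw [hde]; exact hcoer d
    have hen : ‖e‖ ≤ M * ‖d‖ := hAnorm u₁ u₂
    have hexp : ‖d - ρ • e‖^2 = ‖d‖^2 - 2*(ρ*⟪d, e⟫_ℝ) + ρ^2*‖e‖^2 := by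
      rw [norm_sub_sq_real, real_inner_smul_right, norm_smul, Real.norm_eq_abs,
        abs_of_pos hρ]
      ring
    rw [hdz, hexp]
    have hKval : 1 - 2*ρ*α + ρ^2*M^2 = K := by
      rw [hρdef, hK]; field_simp; ring
    have hρe : ρ^2*‖e‖^2 ≤ ρ^2*(M^2*‖d‖^2) := by
      have := mul_self_le_mul_self (norm_nonneg e) hen
      have hρ2 : (0:ℝ) ≤ ρ^2 := sq_nonneg ρ
      nlinarith
    nlinarith [hcd, hρe, sq_nonneg ‖d‖, hρ.le]
  -- the prox map
  have hprox : ∀ x : H, ∃ w, j w ≠ ⊤ ∧ ∀ v, j v ≠ ⊤ →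
      0 ≤ 2*(1/(2*ρ))*⟪w, v - w⟫_ℝ + ⟪-((1/ρ) • z x), v - w⟫_ℝ
        + (j v).toReal - (j w).toReal :=
    fun x => prox_exists j hconv hlsc hnobot x0 hx0 (1/(2*ρ)) (by positivity) _
  choose T hT1 hT2 using hprox
  have hchar : ∀ x v : H, j v ≠ ⊤ →
      0 ≤ ⟪T x - z x, v - T x⟫_ℝ + ρ * (jr v - jr (T x)) := by
    intro x v hv
    have h := hT2 x v hv
    have h1 : 2*(1/(2*ρ)) = 1/ρ := by field_simp
    rw [h1, inner_neg_left, real_inner_smul_left] at h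
    have h2 : ⟪T x - z x, v - T x⟫_ℝ = ⟪T x, v - T x⟫_ℝ - ⟪z x, v - T x⟫_ℝ := by
      rw [inner_sub_left]
    rw [h2]
    have h3 : 0 ≤ (1/ρ) * ⟪T x, v - T x⟫_ℝ - (1/ρ) * ⟪z x, v - T x⟫_ℝ + (jr v - jr (T x)) := by
      simp only [hjr] at h ⊢
      linarith
    have h4 := mul_le_mul_of_nonneg_left h3 hρ.le
    rw [mul_zero] at h4
    calc (0:ℝ) ≤ ρ * ((1/ρ) * ⟪T x, v - T x⟫_ℝ - (1/ρ) * ⟪z x, v - T x⟫_ℝ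
        + (jr v - jr (T x))) := h4
      _ = ρ * (1/ρ) * (⟪T x, v - T x⟫_ℝ - ⟪z x, v - T x⟫_ℝ) + ρ * (jr v - jr (T x)) := by
          ring
      _ = ⟪T x, v - T x⟫_ℝ - ⟪z x, v - T x⟫_ℝ + ρ * (jr v - jr (T x)) := by
          rw [mul_one_div_cancel hρ.ne', one_mul]
  -- T ∘ z is nonexpansive in z
  have hTnon : ∀ x₁ x₂ : H, ‖T x₁ - T x₂‖ ≤ ‖z x₁ - z x₂‖ := by
    intro x₁ x₂
    have h1 := hchar x₁ (T x₂) (hT1 x₂)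
    have h2 := hchar x₂ (T x₁) (hT1 x₁)
    have h3 : ⟪T x₁ - T x₂, T x₁ - T x₂⟫_ℝ ≤ ⟪z x₁ - z x₂, T x₁ - T x₂⟫_ℝ := by
      have e1 : ⟪T x₁ - z x₁, T x₂ - T x₁⟫_ℝ + ⟪T x₂ - z x₂, T x₁ - T x₂⟫_ℝ
          = ⟪z x₁ - z x₂, T x₁ - T x₂⟫_ℝ - ⟪T x₁ - T x₂, T x₁ - T x₂⟫_ℝ := by
        simp only [inner_sub_left, inner_sub_right]
        ring
      linarith
    have h4 : ‖T x₁ - T x₂‖^2 ≤ ‖z x₁ - z x₂‖ * ‖T x₁ - T x₂‖ := by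
      rw [← real_inner_self_eq_norm_sq]
      exact le_trans h3 (real_inner_le_norm _ _)
    rcases eq_or_lt_of_le (norm_nonneg (T x₁ - T x₂)) with h | h
    · rw [← h]; positivity
    · nlinarith
  -- contraction
  set K' : ℝ := max K 0 with hK'
  set κ : ℝ := Real.sqrt K' with hκ
  clear_value K' κ
  have hK'lt : K' < 1 := by
    rw [hK', max_lt_iff]
    refine ⟨?_, by norm_num⟩
    rw [hK]
    have : 0 < α^2/M^2 := by positivity
    linarith
  have hK'0 : 0 ≤ K' := by rw [hK']; exact le_max_right _ _
  have hKK' : K ≤ K' := by rw [hK']; exact le_max_left _ _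
  have hκ1 : κ < 1 := by
    rw [hκ, show (1:ℝ) = Real.sqrt 1 from (Real.sqrt_one).symm]
    exact Real.sqrt_lt_sqrt hK'0 hK'lt
  have hTlip : ∀ x₁ x₂ : H, ‖T x₁ - T x₂‖ ≤ κ * ‖x₁ - x₂‖ := by
    intro x₁ x₂
    have h1 := hTnon x₁ x₂
    have h2 := hzlip x₁ x₂
    have h3 : ‖z x₁ - z x₂‖^2 ≤ K' * ‖x₁ - x₂‖^2 := by
      nlinarith [sq_nonneg ‖x₁ - x₂‖, hKK']
    have h4 : ‖T x₁ - T x₂‖^2 ≤ K' * ‖x₁ - x₂‖^2 := by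
      nlinarith [norm_nonneg (z x₁ - z x₂), norm_nonneg (T x₁ - T x₂)]
    calc ‖T x₁ - T x₂‖ = Real.sqrt (‖T x₁ - T x₂‖^2) := (Real.sqrt_sq (norm_nonneg _)).symm
      _ ≤ Real.sqrt (K' * ‖x₁ - x₂‖^2) := Real.sqrt_le_sqrt h4
      _ = κ * ‖x₁ - x₂‖ := by
          rw [hκ, Real.sqrt_mul hK'0, Real.sqrt_sq (norm_nonneg _)]
  have hκ0 : 0 ≤ κ := hκ ▸ Real.sqrt_nonneg _
  have hcontr : ContractingWith κ.toNNReal T := by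
    constructor
    · rw [← NNReal.coe_lt_coe, Real.coe_toNNReal κ hκ0, NNReal.coe_one]
      exact hκ1
    · apply LipschitzWith.of_dist_le_mul
      intro x y
      rw [Real.coe_toNNReal κ hκ0, dist_eq_norm, dist_eq_norm]
      exact hTlip x y
  obtain ⟨u, hufix, -⟩ := hcontr.exists_fixedPoint (0 : H) (edist_ne_top _ _)
  have huT : T u = u := hufix
  have huD : j u ≠ ⊤ := huT ▸ hT1 u
  -- u solves the VI (real form)
  have hureal : ∀ v : H, j v ≠ ⊤ → L (v - u) + jr u ≤ a u (v - u) + jr v := by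
    intro v hv
    have h := hchar u v hv
    rw [huT] at h
    have huz : u - z u = ρ • (Amap u - l) := by
      simp only [hz]
      exact sub_sub_cancel _ _
    rw [huz, real_inner_smul_left, inner_sub_left, hA, hL] at h
    have h2 : 0 ≤ ρ * ((a u (v - u) - L (v - u)) + (jr v - jr u)) := by
      simp only [hjr] at h ⊢
      linarith [h]
    have h4 : 0 ≤ (a u (v - u) - L (v - u)) + (jr v - jr u) := by
      by_contra hcon
      push_neg at hcon
      nlinarith [h2, hρ]
    linarith
  -- EReal form
  have husol : ∀ v : H, ((a u (v - u) : ℝ) : EReal) + j v ≥ ((L (v - u) : ℝ) : EReal) + j u := by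
    intro v
    by_cases hv : j v = ⊤
    · rw [hv, EReal.coe_add_top]
      exact le_top
    · rw [ge_iff_le, hcoe v hv, hcoe u huD, ← EReal.coe_add, ← EReal.coe_add,
        EReal.coe_le_coe_iff]
      exact hureal v hv
  refine ⟨u, husol, ?_⟩
  -- uniqueness
  intro u' hu'
  have hu'D : j u' ≠ ⊤ := by
    intro htop
    have h := hu' x0
    rw [ge_iff_le, htop, EReal.coe_add_top, top_le_iff, hcoe x0 hx0, ← EReal.coe_add] at h
    exact EReal.coe_ne_top _ h
  -- real form of u' inequality at v = u
  have h1 : L (u - u') + jr u' ≤ a u' (u - u') + jr u := by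
    have h := hu' u
    rw [ge_iff_le, hcoe u huD, hcoe u' hu'D, ← EReal.coe_add, ← EReal.coe_add,
      EReal.coe_le_coe_iff] at h
    exact h
  have h2 : L (u' - u) + jr u ≤ a u (u' - u) + jr u' := hureal u' hu'D
  have hLsum : L (u - u') + L (u' - u) = 0 := by
    rw [← map_add]
    simp
  have hasum : a u' (u - u') + a u (u' - u) = -(a (u' - u) (u' - u)) := by
    simp only [map_sub, LinearMap.sub_apply]
    ring
  have hc2 := hcoer (u' - u)
  have hnn : α * ‖u' - u‖^2 ≤ 0 := by linarith
  have : ‖u' - u‖^2 ≤ 0 := by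
    nlinarith
  have : u' - u = 0 := by
    have h0 : ‖u' - u‖ = 0 := by nlinarith [norm_nonneg (u' - u), sq_nonneg ‖u' - u‖]
    exact norm_eq_zero.mp h0
  exact sub_eq_zero.mp this
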